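/- The system u_t = u_xxx + 3u·u_xx + 3u_x² + 3u²·u_x + v_xx + u_x·v + u·v_x, v_t = v_xxx − 3u·v_xx + 3v·u_xx + 6u·u_x·v + 3u²·v_x + 4v·v_x can be written in Hamiltonian form with operator J: namely J applied to the column vector (E_u(h₁), E_v(h₁)) = (−v_x + u·v, u_x + (1/2)u² + (2/3)v) equals the column vector of right-hand sides (F₁, F₂), where J₁₁ = −(1/3)D, J₁₂ = D² + 2D∘u, J₂₁ = −D² + 2u∘D, J₂₂ = 4v∘D + 2v_x. -/

import Mathlib

open MvPolynomial

/-- The differential polynomial ring ℝ[u, u_x, u_xx, …, v, v_x, …]: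
variable `X (0, n)` is `u_{nx}`, `X (1, n)` is `v_{nx}`. -/
abbrev DPoly : Type := MvPolynomial (Fin 2 × ℕ) ℝ

/-- The total derivative operator D_x, acting by D_x(u_{nx}) = u_{(n+1)x}. -/
noncomputable def Dx : Derivation ℝ DPoly DPoly :=
  MvPolynomial.mkDerivation ℝ (fun p => X (p.1, p.2 + 1))

/-- `U n` is `u_{nx}`. -/
noncomputable def U (n : ℕ) : DPoly := X ((0 : Fin 2), n)
/-- `V n` is `v_{nx}`. -/
noncomputable def V (n : ℕ) : DPoly := X ((1 : Fin 2), n)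

/-- `Dxn n` is the n-th power of the total derivative. -/
noncomputable def Dxn (n : ℕ) : DPoly →ₗ[ℝ] DPoly := Dx.toLinearMap ^ n

/-- The evolutionary (time) derivative attached to the flow (u_t, v_t) = (F₁, F₂):
D_t h = Σₙ (∂h/∂u_{nx})·D_x^n(F₁) + Σₙ (∂h/∂v_{nx})·D_x^n(F₂). -/
noncomputable def Dt (F₁ F₂ : DPoly) : Derivation ℝ DPoly DPoly :=
  MvPolynomial.mkDerivation ℝ (fun p => Dxn p.2 (if p.1 = 0 then F₁ else F₂))

/-- Euler (variational) derivative: E_i(h) = Σₙ (−D_x)^n (∂h/∂X(i,n)). -/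
noncomputable def Eul (i : Fin 2) (h : DPoly) : DPoly :=
  ∑ᶠ n : ℕ, ((-1 : ℝ) ^ n) • Dxn n (pderiv (i, n) h)

/-- The substitution homomorphism `v = 0`: sends every `v_{nx}` to 0 and fixes `u_{nx}`. -/
noncomputable def subV0 : DPoly →ₐ[ℝ] DPoly :=
  aeval (fun p : Fin 2 × ℕ => if p.1 = 0 then X p else 0)

/-- J₁₁ = −(1/3)D. -/
noncomputable def J11 (g : DPoly) : DPoly := -((1/3 : ℝ) • Dx g)
/-- J₁₂ = D² + 2D∘u (first multiply by u, then differentiate). -/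
noncomputable def J12 (g : DPoly) : DPoly := Dxn 2 g + 2*Dx (U 0 * g)
/-- J₂₁ = −D² + 2u∘D. -/
noncomputable def J21 (g : DPoly) : DPoly := -(Dxn 2 g) + 2*(U 0 * Dx g)
/-- J₂₂ = 4v∘D + 2v_x. -/
noncomputable def J22 (g : DPoly) : DPoly := 4*(V 0 * Dx g) + 2*(V 1 * g)

@[simp] lemma Dx_U (n : ℕ) : Dx (U n) = U (n + 1) := by
  simp [Dx, U, mkDerivation_X]

@[simp] lemma Dx_V (n : ℕ) : Dx (V n) = V (n + 1) := by
  simp [Dx, V, mkDerivation_X]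

lemma Dxn_two_apply (g : DPoly) : Dxn 2 g = Dx (Dx g) := by
  simp [Dxn, pow_two]

/-- the new system is Hamiltonian with operator J and Hamiltonian
density h₁: J applied to (E_u(h₁), E_v(h₁)) = (−v_x + u·v, u_x + (1/2)u² + (2/3)v)
gives the right-hand sides (F₁, F₂). -/
theorem stmt9 :
    J11 (-(V 1) + U 0*V 0) + J12 (U 1 + (1/2 : ℝ) • (U 0^2) + (2/3 : ℝ) • (V 0))
      = U 3 + 3*U 0*U 2 + 3*U 1^2 + 3*U 0^2*U 1 + V 2 + U 1*V 0 + U 0*V 1 ∧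
    J21 (-(V 1) + U 0*V 0) + J22 (U 1 + (1/2 : ℝ) • (U 0^2) + (2/3 : ℝ) • (V 0))
      = V 3 - 3*U 0*V 2 + 3*V 0*U 2 + 6*U 0*U 1*V 0 + 3*U 0^2*V 1 + 4*V 0*V 1 := by
  constructor <;>
  -- `ring` cannot cancel the real coefficients `1/3`, `1/2`, `2/3` in `DPoly`, which is not a field
  · apply smul_right_injective DPoly (show (6 : ℝ) ≠ 0 by norm_num)
    simp only [J11, J12, J21, J22, Dxn_two_apply, map_add, map_neg, Derivation.map_smul,
      Derivation.leibniz, Derivation.leibniz_pow, map_nsmul, Dx_U, Dx_V, smul_eq_mul, mul_add,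
      smul_add, smul_sub, smul_neg, mul_smul_comm, smul_smul]
    norm_num
    simp only [smul_eq_C_mul, map_ofNat]
    ring
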